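/- Leakage continuity under state-sequence perturbation: let s₁, s₂ ∈ S^n with Hamming distance d_H(s₁,s₂) ≤ nα, and let (M, X^n) be jointly distributed (independently of the state) and Z^n be produced from X^n through the memoryless state-dependent channel Π_i V_{s_i}(z_i|x_i). Then |I(M; Z^n | S^n = s₁) − I(M; Z^n | S^n = s₂)| ≤ nα log|Z|. -/

import Mathlib

/-!
Let `A` be the set of coordinates on which `s₁` and `s₂` agree and split `Zⁿ = (Z_A, Z_Aᶜ)`.
Because the channel is memoryless, the outputs outside `A` marginalise out, so the joint law of
`(M, Z_A)` is the same under both state sequences and `I(M; Z_A)` is common to them. For any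
`f, g` and `h` with values in `C`, strong subadditivity gives `I(f; g) ≤ I(f; (g, h))`, and
`H(h) ≤ log |C|` gives `I(f; (g, h)) ≤ I(f; g) + log |C|`. So both leakages lie in
`[I(M; Z_A), I(M; Z_A) + |Aᶜ| log |Z|]`, and `|Aᶜ| ≤ nα`.
-/

open scoped Classical

/-- Probability that a function of the sample takes a given value. -/
noncomputable def pOf {Ω A : Type*} [Fintype Ω] (P : Ω → ℝ) (f : Ω → A) (a : A) : ℝ :=
  ∑ ω ∈ Finset.univ.filter (fun ω => f ω = a), P ω

/-- Shannon entropy (base 2) of a random variable `f` under pmf `P`. -/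
noncomputable def ent {Ω A : Type*} [Fintype Ω] [Fintype A] (P : Ω → ℝ) (f : Ω → A) : ℝ :=
  - ∑ a, pOf P f a * Real.logb 2 (pOf P f a)

/-- Mutual information `I(f;g)` under pmf `P`. -/
noncomputable def mi {Ω A B : Type*} [Fintype Ω] [Fintype A] [Fintype B]
    (P : Ω → ℝ) (f : Ω → A) (g : Ω → B) : ℝ :=
  ent P f + ent P g - ent P (fun ω => (f ω, g ω))

open Finset Real

section Entropy

variable {Ω Ω' A B C : Type*} [Fintype Ω] {P : Ω → ℝ}

lemma pOf_nonneg (h0 : ∀ ω, 0 ≤ P ω) (f : Ω → A) (a : A) : 0 ≤ pOf P f a :=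
  sum_nonneg fun ω _ => h0 ω

lemma pOf_mono_comp (h0 : ∀ ω, 0 ≤ P ω) (f : Ω → A) (φ : A → B) (a : A) :
    pOf P f a ≤ pOf P (fun ω => φ (f ω)) (φ a) :=
  sum_le_sum_of_subset_of_nonneg (fun ω hω => by simp_all) fun ω _ _ => h0 ω

lemma le_pOf (h0 : ∀ ω, 0 ≤ P ω) (f : Ω → A) (ω : Ω) : P ω ≤ pOf P f (f ω) :=
  single_le_sum (f := P) (fun ω _ => h0 ω) (by simp)

lemma pOf_pos (h0 : ∀ ω, 0 ≤ P ω) (f : Ω → A) {ω : Ω} (hω : P ω ≠ 0) : 0 < pOf P f (f ω) :=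
  ((h0 ω).lt_of_ne' hω).trans_le (le_pOf h0 f ω)

lemma sum_pOf_mul [Fintype A] (f : Ω → A) (φ : A → ℝ) :
    ∑ a, pOf P f a * φ a = ∑ ω, P ω * φ (f ω) := by
  rw [← sum_fiberwise univ f fun ω => P ω * φ (f ω)]
  refine sum_congr rfl fun a _ => ?_
  rw [pOf, sum_mul]
  exact sum_congr rfl fun ω hω => by rw [(mem_filter.mp hω).2]

lemma sum_pOf [Fintype A] (f : Ω → A) : ∑ a, pOf P f a = ∑ ω, P ω :=
  sum_fiberwise univ f P

lemma sum_pOf_pair_left [Fintype B] (f : Ω → A) (g : Ω → B) (a : A) :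
    ∑ b, pOf P (fun ω => (f ω, g ω)) (a, b) = pOf P f a := by
  simp_rw [pOf, Prod.mk.injEq, ← filter_filter]
  exact sum_fiberwise _ g P

lemma sum_pOf_pair_right [Fintype A] (f : Ω → A) (g : Ω → B) (b : B) :
    ∑ a, pOf P (fun ω => (f ω, g ω)) (a, b) = pOf P g b := by
  simp_rw [pOf, Prod.mk.injEq, and_comm (a := f _ = _), ← filter_filter]
  exact sum_fiberwise _ f P

lemma ent_eq_sum [Fintype A] (f : Ω → A) : ent P f = -∑ ω, P ω * logb 2 (pOf P f (f ω)) := by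
  rw [ent, sum_pOf_mul f fun a => logb 2 (pOf P f a)]

lemma ent_comp_equiv [Fintype A] [Fintype B] (f : Ω → A) (e : A ≃ B) :
    ent P (fun ω => e (f ω)) = ent P f := by
  have hp : ∀ a, pOf P (fun ω => e (f ω)) (e a) = pOf P f a := fun a => by
    simp only [pOf, e.apply_eq_iff_eq]
  rw [ent, ent, ← e.sum_comp]
  simp only [hp]

lemma ent_comp_le [Fintype A] [Fintype B] (h0 : ∀ ω, 0 ≤ P ω) (f : Ω → A) (φ : A → B) :
    ent P (fun ω => φ (f ω)) ≤ ent P f := by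
  rw [ent_eq_sum, ent_eq_sum, neg_le_neg_iff]
  refine sum_le_sum fun ω _ => ?_
  rcases eq_or_ne (P ω) 0 with hω | hω
  · simp [hω]
  · exact mul_le_mul_of_nonneg_left
      (logb_le_logb_of_le one_lt_two (pOf_pos h0 f hω) (pOf_mono_comp h0 f φ (f ω))) (h0 ω)

lemma sum_mul_log_le_sum_mul_log [Fintype A] {p q : A → ℝ} (hp : ∀ a, 0 ≤ p a)
    (hq : ∀ a, 0 ≤ q a) (hpq : ∀ a, p a ≠ 0 → q a ≠ 0) (hsum : ∑ a, q a ≤ ∑ a, p a) :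
    ∑ a, p a * log (q a) ≤ ∑ a, p a * log (p a) := by
  have key : ∀ a, p a * log (q a) - p a * log (p a) ≤ q a - p a := fun a => by
    rcases eq_or_ne (p a) 0 with ha | ha
    · simp [ha, hq a]
    · have hpa := (hp a).lt_of_ne' ha
      have hqa := (hq a).lt_of_ne' (hpq a ha)
      have hlog := log_le_sub_one_of_pos (div_pos hqa hpa)
      rw [log_div hqa.ne' hpa.ne'] at hlog
      calc p a * log (q a) - p a * log (p a) = p a * (log (q a) - log (p a)) := by ring
        _ ≤ p a * (q a / p a - 1) := mul_le_mul_of_nonneg_left hlog hpa.le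
        _ = q a - p a := by field_simp
  have hkey := sum_le_sum fun a (_ : a ∈ univ) => key a
  rw [sum_sub_distrib, sum_sub_distrib] at hkey
  linarith

lemma ent_le_neg_sum_mul_logb [Fintype A] (h0 : ∀ ω, 0 ≤ P ω) (F : Ω → A) {q : A → ℝ}
    (hq : ∀ a, 0 ≤ q a) (hsum : ∑ a, q a ≤ ∑ ω, P ω) (hpos : ∀ ω, P ω ≠ 0 → q (F ω) ≠ 0) :
    ent P F ≤ -∑ ω, P ω * logb 2 (q (F ω)) := by
  have hsupp : ∀ a, pOf P F a ≠ 0 → q a ≠ 0 := fun a ha => by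
    obtain ⟨ω, hω, hPω⟩ := exists_ne_zero_of_sum_ne_zero ha
    rw [(mem_filter.mp hω).2.symm]
    exact hpos ω hPω
  have gibbs := sum_mul_log_le_sum_mul_log (pOf_nonneg h0 F) hq hsupp (by rwa [sum_pOf])
  rw [ent, ← sum_pOf_mul F fun a => logb 2 (q a), neg_le_neg_iff]
  simp only [logb, ← mul_div_assoc, ← sum_div]
  exact div_le_div_of_nonneg_right gibbs (log_pos one_lt_two).le

lemma sum_mul_congr_of_ne_zero {u v : Ω → ℝ} (h : ∀ ω, P ω ≠ 0 → u ω = v ω) :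
    ∑ ω, P ω * u ω = ∑ ω, P ω * v ω :=
  sum_congr rfl fun ω _ => by rcases eq_or_ne (P ω) 0 with hω | hω <;> simp [hω, h]

lemma ent_le_logb_card [Fintype A] (h0 : ∀ ω, 0 ≤ P ω) (h1 : ∑ ω, P ω = 1) (f : Ω → A) :
    ent P f ≤ logb 2 (Fintype.card A) := by
  have hcard : ∀ ω, ((Fintype.card A : ℝ))⁻¹ ≠ 0 := fun ω =>
    inv_ne_zero (Nat.cast_ne_zero.mpr (@Fintype.card_ne_zero _ _ ⟨f ω⟩))
  have hsum : ∑ _a : A, ((Fintype.card A : ℝ))⁻¹ ≤ ∑ ω, P ω := by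
    rw [sum_const, card_univ, nsmul_eq_mul, h1]
    exact mul_inv_le_one
  calc ent P f ≤ -∑ ω, P ω * logb 2 (Fintype.card A : ℝ)⁻¹ :=
        ent_le_neg_sum_mul_logb h0 f (fun _ => by positivity) hsum fun ω _ => hcard ω
    _ = logb 2 (Fintype.card A) := by rw [← sum_mul, h1, logb_inv]; ring

lemma ent_pair_le [Fintype A] [Fintype B] (h0 : ∀ ω, 0 ≤ P ω) (h1 : ∑ ω, P ω = 1)
    (f : Ω → A) (g : Ω → B) : ent P (fun ω => (f ω, g ω)) ≤ ent P f + ent P g := by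
  have hsum : ∑ c : A × B, pOf P f c.1 * pOf P g c.2 = ∑ ω, P ω := by
    simp only [Fintype.sum_prod_type, ← mul_sum, ← sum_mul, sum_pOf, h1, one_mul]
  have hcross := ent_le_neg_sum_mul_logb h0 (fun ω => (f ω, g ω))
    (q := fun c => pOf P f c.1 * pOf P g c.2)
    (fun c => mul_nonneg (pOf_nonneg h0 f c.1) (pOf_nonneg h0 g c.2)) hsum.le
    fun ω hω => (mul_pos (pOf_pos h0 f hω) (pOf_pos h0 g hω)).ne'
  rw [sum_mul_congr_of_ne_zero fun ω hω =>
    logb_mul (pOf_pos h0 f hω).ne' (pOf_pos h0 g hω).ne'] at hcross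
  rw [ent_eq_sum f, ent_eq_sum g]
  simp only [mul_add, sum_add_distrib] at hcross
  linarith

lemma ent_strong_subadd [Fintype A] [Fintype B] [Fintype C] (h0 : ∀ ω, 0 ≤ P ω)
    (f : Ω → A) (g : Ω → B) (h : Ω → C) :
    ent P g + ent P (fun ω => (f ω, (g ω, h ω)))
      ≤ ent P (fun ω => (f ω, g ω)) + ent P (fun ω => (g ω, h ω)) := by
  set pfg := pOf P fun ω => (f ω, g ω)
  set pgh := pOf P fun ω => (g ω, h ω)
  set pg := pOf P g
  -- `p(a, b) p(b, c) / p(b)` is the law that makes `f` and `h` conditionally independent given `g`.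
  have hsum : ∑ d : A × B × C, pfg (d.1, d.2.1) * pgh d.2 / pg d.2.1 = ∑ ω, P ω := calc
    _ = ∑ b, (∑ a, pfg (a, b)) * (∑ c, pgh (b, c)) / pg b := by
      simp only [Fintype.sum_prod_type, sum_mul_sum, sum_div]
      exact sum_comm
    _ = ∑ ω, P ω := by
      simp only [pfg, pgh, pg, sum_pOf_pair_right, sum_pOf_pair_left, mul_self_div_self, sum_pOf]
  have hpos : ∀ ω, P ω ≠ 0 → 0 < pfg (f ω, g ω) ∧ 0 < pgh (g ω, h ω) ∧ 0 < pg (g ω) :=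
    fun ω hω => ⟨pOf_pos h0 _ hω, pOf_pos h0 _ hω, pOf_pos h0 _ hω⟩
  have hcross := ent_le_neg_sum_mul_logb h0 (fun ω => (f ω, (g ω, h ω)))
    (q := fun d => pfg (d.1, d.2.1) * pgh d.2 / pg d.2.1)
    (fun d => div_nonneg (mul_nonneg (pOf_nonneg h0 _ _) (pOf_nonneg h0 _ _)) (pOf_nonneg h0 _ _))
    hsum.le fun ω hω => by
      obtain ⟨hfg, hgh, hg⟩ := hpos ω hω
      positivity
  rw [sum_mul_congr_of_ne_zero fun ω hω => by
    obtain ⟨hfg, hgh, hg⟩ := hpos ω hω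
    exact (logb_div (mul_pos hfg hgh).ne' hg.ne').trans
      (congrArg (· - _) (logb_mul hfg.ne' hgh.ne'))] at hcross
  rw [ent_eq_sum g, ent_eq_sum (fun ω => (f ω, g ω)), ent_eq_sum (fun ω => (g ω, h ω))]
  simp only [mul_sub, mul_add, sum_sub_distrib, sum_add_distrib] at hcross
  linarith

lemma mi_le_mi_pair [Fintype A] [Fintype B] [Fintype C] (h0 : ∀ ω, 0 ≤ P ω)
    (f : Ω → A) (g : Ω → B) (h : Ω → C) : mi P f g ≤ mi P f (fun ω => (g ω, h ω)) := by
  have := ent_strong_subadd h0 f g h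
  unfold mi
  linarith

lemma mi_pair_le [Fintype A] [Fintype B] [Fintype C] (h0 : ∀ ω, 0 ≤ P ω)
    (h1 : ∑ ω, P ω = 1) (f : Ω → A) (g : Ω → B) (h : Ω → C) :
    mi P f (fun ω => (g ω, h ω)) ≤ mi P f g + logb 2 (Fintype.card C) := by
  have hsub := ent_pair_le h0 h1 g h
  have hcard := ent_le_logb_card h0 h1 h
  have hmono := ent_comp_le h0 (fun ω => (f ω, (g ω, h ω))) fun d => (d.1, d.2.1)
  unfold mi
  linarith

lemma mi_congr [Fintype Ω'] [Fintype A] [Fintype B] {Q : Ω' → ℝ}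
    {f : Ω → A} {g : Ω → B} {f' : Ω' → A} {g' : Ω' → B}
    (hlaw : ∀ c, pOf P (fun ω => (f ω, g ω)) c = pOf Q (fun ω => (f' ω, g' ω)) c) :
    mi P f g = mi Q f' g' := by
  have hf : pOf P f = pOf Q f' := funext fun a => by
    simp only [← sum_pOf_pair_left f g, ← sum_pOf_pair_left f' g', hlaw]
  have hg : pOf P g = pOf Q g' := funext fun b => by
    simp only [← sum_pOf_pair_right f g, ← sum_pOf_pair_right f' g', hlaw]
  simp only [mi, ent, hf, hg, funext hlaw]

lemma mi_comp_equiv [Fintype A] [Fintype B] [Fintype C] (f : Ω → A) (g : Ω → B) (e : B ≃ C) :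
    mi P f (fun ω => e (g ω)) = mi P f g := by
  rw [mi, mi, ent_comp_equiv g e,
    ← ent_comp_equiv (fun ω => (f ω, g ω)) ((Equiv.refl A).prodCongr e)]
  rfl

lemma mi_pi_eq_mi_subtype_prod {ι Z : Type*} [Fintype ι] [DecidableEq ι] [Fintype Z] [Fintype A]
    (f : Ω → A) (z : Ω → ι → Z) (p : ι → Prop) :
    mi P f z = mi P f (fun ω => (fun i : {i // p i} => z ω i, fun i : {i // ¬ p i} => z ω i)) := by
  rw [← mi_comp_equiv f z (Equiv.piEquivPiSubtypeProd p fun _ => Z)]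
  rfl

lemma abs_mi_pair_sub_le [Fintype A] [Fintype B] [Fintype C] {Q : Ω → ℝ}
    (hP0 : ∀ ω, 0 ≤ P ω) (hP1 : ∑ ω, P ω = 1) (hQ0 : ∀ ω, 0 ≤ Q ω) (hQ1 : ∑ ω, Q ω = 1)
    (f : Ω → A) (g : Ω → B) (h : Ω → C)
    (hlaw : ∀ c, pOf P (fun ω => (f ω, g ω)) c = pOf Q (fun ω => (f ω, g ω)) c) :
    |mi P f (fun ω => (g ω, h ω)) - mi Q f (fun ω => (g ω, h ω))| ≤ logb 2 (Fintype.card C) := by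
  have hfg : mi P f g = mi Q f g := mi_congr hlaw
  have := mi_le_mi_pair hP0 f g h
  have := mi_le_mi_pair hQ0 f g h
  have := mi_pair_le hP0 hP1 f g h
  have := mi_pair_le hQ0 hQ1 f g h
  rw [abs_le]
  constructor <;> linarith

end Entropy

section StateChannel

variable {Msg ι S X Z : Type*} [Fintype ι]

lemma sum_pi_prod_eq_one [DecidableEq ι] [Fintype Z] {K : ι → Z → ℝ}
    (hK : ∀ i, ∑ z, K i z = 1) :
    ∑ z : ι → Z, ∏ i, K i (z i) = 1 := by
  rw [← Fintype.prod_sum]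
  simp [hK]

lemma sum_ite_restrict_eq_prod [DecidableEq ι] [Fintype Z] (p : ι → Prop) {K : ι → Z → ℝ}
    (hK : ∀ i, ∑ z, K i z = 1) (g : {i // p i} → Z) :
    ∑ z : ι → Z, (if (fun i : {i // p i} => z i) = g then ∏ i, K i (z i) else 0)
      = ∏ i : {i // p i}, K i (g i) := by
  have hrest : ∑ v : {i // ¬ p i} → Z, ∏ i : {i // ¬ p i}, K i (v i) = 1 :=
    sum_pi_prod_eq_one fun i => hK i
  rw [← (Equiv.piEquivPiSubtypeProd p fun _ => Z).symm.sum_comp, Fintype.sum_prod_type]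
  simp only [Equiv.piEquivPiSubtypeProd_symm_apply, Subtype.prop, ↓reduceDIte, Subtype.coe_eta,
    ← Fintype.prod_subtype_mul_prod_subtype p, fun i : {i // ¬ p i} => i.2, sum_ite_irrel,
    ← mul_sum, sum_const_zero, sum_ite_eq', mem_univ, ↓reduceIte]
  rw [hrest, mul_one]

noncomputable def jointGivenState (PMX : Msg → (ι → X) → ℝ) (V : S → X → Z → ℝ) (s : ι → S)
    (ω : Msg × (ι → X) × (ι → Z)) : ℝ :=
  PMX ω.1 ω.2.1 * ∏ i, V (s i) (ω.2.1 i) (ω.2.2 i)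

lemma jointGivenState_nonneg {PMX : Msg → (ι → X) → ℝ} (h0 : ∀ m x, 0 ≤ PMX m x)
    {V : S → X → Z → ℝ} (hV0 : ∀ s x z, 0 ≤ V s x z) (s : ι → S) (ω : Msg × (ι → X) × (ι → Z)) :
    0 ≤ jointGivenState PMX V s ω :=
  mul_nonneg (h0 _ _) (prod_nonneg fun _ _ => hV0 _ _ _)

lemma sum_jointGivenState [DecidableEq ι] [Fintype Msg] [Fintype X] [Fintype Z]
    {PMX : Msg → (ι → X) → ℝ} (h1 : ∑ m, ∑ x, PMX m x = 1)
    {V : S → X → Z → ℝ} (hV1 : ∀ s x, ∑ z, V s x z = 1) (s : ι → S) :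
    ∑ ω, jointGivenState PMX V s ω = 1 := by
  simp only [jointGivenState, Fintype.sum_prod_type, ← mul_sum,
    sum_pi_prod_eq_one fun i => hV1 _ _, mul_one, h1]

lemma pOf_jointGivenState_restrict [DecidableEq ι] [Fintype Msg] [Fintype X] [Fintype Z]
    (PMX : Msg → (ι → X) → ℝ) {V : S → X → Z → ℝ} (hV1 : ∀ s x, ∑ z, V s x z = 1) (s : ι → S)
    (p : ι → Prop) (m : Msg) (g : {i // p i} → Z) :
    pOf (jointGivenState PMX V s) (fun ω => (ω.1, fun i : {i // p i} => ω.2.2 i)) (m, g)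
      = ∑ x, PMX m x * ∏ i : {i // p i}, V (s i) (x i) (g i) := by
  simp only [pOf, sum_filter, Fintype.sum_prod_type, jointGivenState, Prod.mk.injEq, ite_and,
    sum_ite_irrel, sum_const_zero, sum_ite_eq', mem_univ, ↓reduceIte]
  refine sum_congr rfl fun x _ => ?_
  rw [← sum_ite_restrict_eq_prod p (fun i => hV1 (s i) (x i)) g, mul_sum]
  simp only [mul_ite, mul_zero]

lemma pOf_jointGivenState_restrict_congr [DecidableEq ι] [Fintype Msg] [Fintype X] [Fintype Z]
    (PMX : Msg → (ι → X) → ℝ) {V : S → X → Z → ℝ} (hV1 : ∀ s x, ∑ z, V s x z = 1)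
    {p : ι → Prop} {s₁ s₂ : ι → S} (hs : ∀ i, p i → s₁ i = s₂ i) (c : Msg × ({i // p i} → Z)) :
    pOf (jointGivenState PMX V s₁) (fun ω => (ω.1, fun i : {i // p i} => ω.2.2 i)) c
      = pOf (jointGivenState PMX V s₂) (fun ω => (ω.1, fun i : {i // p i} => ω.2.2 i)) c := by
  obtain ⟨m, g⟩ := c
  simp only [pOf_jointGivenState_restrict PMX hV1, fun i : {i // p i} => hs i i.2]

end StateChannel

theorem leakage_continuity_general (Msg S X Z : Type) [Fintype Msg] [Fintype X]
    [Fintype Z] (n : ℕ) (α : ℝ)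
    (PMX : Msg → (Fin n → X) → ℝ) (h0 : ∀ m x, 0 ≤ PMX m x) (h1 : ∑ m, ∑ x, PMX m x = 1)
    (Vch : S → X → Z → ℝ) (hV0 : ∀ s x z, 0 ≤ Vch s x z) (hV1 : ∀ s x, ∑ z, Vch s x z = 1)
    (s₁ s₂ : Fin n → S)
    (hH : ((Finset.univ.filter fun i => s₁ i ≠ s₂ i).card : ℝ) ≤ n * α) :
    |mi (fun ω : Msg × (Fin n → X) × (Fin n → Z) =>
          PMX ω.1 ω.2.1 * ∏ i, Vch (s₁ i) (ω.2.1 i) (ω.2.2 i))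
        (fun ω => ω.1) (fun ω => ω.2.2)
      - mi (fun ω : Msg × (Fin n → X) × (Fin n → Z) =>
          PMX ω.1 ω.2.1 * ∏ i, Vch (s₂ i) (ω.2.1 i) (ω.2.2 i))
        (fun ω => ω.1) (fun ω => ω.2.2)|
      ≤ n * α * Real.logb 2 (Fintype.card Z) := by
  let agree : Fin n → Prop := fun i => s₁ i = s₂ i
  rw [mi_pi_eq_mi_subtype_prod _ _ agree, mi_pi_eq_mi_subtype_prod _ _ agree]
  calc _ ≤ logb 2 (Fintype.card ({i // ¬ agree i} → Z)) :=
        abs_mi_pair_sub_le (jointGivenState_nonneg h0 hV0 s₁) (sum_jointGivenState h1 hV1 s₁)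
          (jointGivenState_nonneg h0 hV0 s₂) (sum_jointGivenState h1 hV1 s₂) _ _ _
          (pOf_jointGivenState_restrict_congr PMX hV1 fun _ h => h)
    _ = (Finset.univ.filter fun i => s₁ i ≠ s₂ i).card * logb 2 (Fintype.card Z) := by
        rw [Fintype.card_fun, Fintype.card_subtype, Nat.cast_pow, logb_pow]
    _ ≤ n * α * logb 2 (Fintype.card Z) :=
        mul_le_mul_of_nonneg_right hH
          (div_nonneg (log_natCast_nonneg _) (log_nonneg one_le_two))

/-- Leakage continuity under state-sequence perturbation: if `d_H(s₁,s₂) ≤ nα` then the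
leakages `I(M;Z^n|S^n=s₁)` and `I(M;Z^n|S^n=s₂)` differ by at most `nα log|Z|`. -/
theorem leakage_continuity (Msg S X Z : Type) [Fintype Msg] [Fintype S] [Fintype X]
    [Fintype Z] (n : ℕ) (α : ℝ)
    (PMX : Msg → (Fin n → X) → ℝ) (h0 : ∀ m x, 0 ≤ PMX m x) (h1 : ∑ m, ∑ x, PMX m x = 1)
    (Vch : S → X → Z → ℝ) (hV0 : ∀ s x z, 0 ≤ Vch s x z) (hV1 : ∀ s x, ∑ z, Vch s x z = 1)
    (s₁ s₂ : Fin n → S)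
    (hH : ((Finset.univ.filter fun i => s₁ i ≠ s₂ i).card : ℝ) ≤ n * α) :
    |mi (fun ω : Msg × (Fin n → X) × (Fin n → Z) =>
          PMX ω.1 ω.2.1 * ∏ i, Vch (s₁ i) (ω.2.1 i) (ω.2.2 i))
        (fun ω => ω.1) (fun ω => ω.2.2)
      - mi (fun ω : Msg × (Fin n → X) × (Fin n → Z) =>
          PMX ω.1 ω.2.1 * ∏ i, Vch (s₂ i) (ω.2.1 i) (ω.2.2 i))
        (fun ω => ω.1) (fun ω => ω.2.2)|
      ≤ n * α * Real.logb 2 (Fintype.card Z) :=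
  leakage_continuity_general Msg S X Z n α PMX h0 h1 Vch hV0 hV1 s₁ s₂ hH
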